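/- Let z̃ be a random vector in ℝ^d, z ∈ ℝ^d fixed, let w_1,…,w_C ∈ ℝ^d with ‖w_c‖ ≤ B and margin ⟨w_y, z⟩ ≥ ⟨w_c, z⟩ + γ for all c ≠ y (γ > 0). Then P(argmax_c ⟨w_c, z̃⟩ ≠ y) ≤ (4(C−1)B²/γ²) · E‖z̃ − z‖². -/

import Mathlib

open MeasureTheory Finset
open scoped RealInnerProductSpace

/-! A misclassified sample `z̃` reverses a margin of `γ` between two weight vectors whose
difference has norm at most `2B`, so by Cauchy–Schwarz `γ² ≤ 4B²‖z̃ - z‖²`. Markov's inequality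
bounds the probability of this event by `4B²/γ² · E‖z̃ - z‖²`, and a union bound over the `C - 1`
wrong classes gives the theorem. -/

section Geometry

variable {E : Type*} [NormedAddCommGroup E] [InnerProductSpace ℝ E]

theorem le_norm_sub_mul_norm_sub_of_margin {u v z x : E} {γ : ℝ}
    (hmargin : ⟪v, z⟫ + γ ≤ ⟪u, z⟫) (hx : ⟪u, x⟫ ≤ ⟪v, x⟫) :
    γ ≤ ‖u - v‖ * ‖x - z‖ :=
  calc γ ≤ ⟪u - v, z - x⟫ := by simp only [inner_sub_left, inner_sub_right]; linarith
    _ ≤ ‖u - v‖ * ‖z - x‖ := real_inner_le_norm _ _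
    _ = ‖u - v‖ * ‖x - z‖ := by rw [norm_sub_rev z]

theorem sq_le_four_mul_sq_mul_norm_sub_sq_of_margin {u v z x : E} {B γ : ℝ} (hγ : 0 ≤ γ)
    (hu : ‖u‖ ≤ B) (hv : ‖v‖ ≤ B) (hmargin : ⟪v, z⟫ + γ ≤ ⟪u, z⟫) (hx : ⟪u, x⟫ ≤ ⟪v, x⟫) :
    γ ^ 2 ≤ 4 * B ^ 2 * ‖x - z‖ ^ 2 := by
  have hdiff : ‖u - v‖ ≤ 2 * B := by linarith [norm_sub_le u v]
  have hγle : γ ≤ 2 * B * ‖x - z‖ :=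
    (le_norm_sub_mul_norm_sub_of_margin hmargin hx).trans (by gcongr)
  calc γ ^ 2 ≤ (2 * B * ‖x - z‖) ^ 2 := pow_le_pow_left₀ hγ hγle 2
    _ = 4 * B ^ 2 * ‖x - z‖ ^ 2 := by ring

end Geometry

section Probability

variable {Ω : Type*} [MeasurableSpace Ω] {μ : Measure Ω}

theorem measureReal_le_integral_div_of_forall_le {f : Ω → ℝ} (hf₀ : 0 ≤ᵐ[μ] f)
    (hf : Integrable f μ) {ε : ℝ} (hε : 0 < ε) {s : Set Ω} (hs : ∀ ω ∈ s, ε ≤ f ω) :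
    μ.real s ≤ (∫ ω, f ω ∂μ) / ε := by
  rw [le_div_iff₀' hε]
  calc ε * μ.real s ≤ ε * μ.real {ω | ε ≤ f ω} :=
        mul_le_mul_of_nonneg_left (measureReal_mono hs (hf.measure_ge_lt_top hε).ne) hε.le
    _ ≤ ∫ ω, f ω ∂μ := mul_meas_ge_le_integral_of_nonneg hf₀ hf ε

theorem measureReal_biUnion_le_card_mul {ι : Type*} (t : Finset ι) (S : ι → Set Ω) {K : ℝ}
    (hS : ∀ i ∈ t, μ.real (S i) ≤ K) :
    μ.real (⋃ i ∈ t, S i) ≤ t.card * K :=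
  calc μ.real (⋃ i ∈ t, S i) ≤ ∑ i ∈ t, μ.real (S i) := measureReal_biUnion_finset_le t S
    _ ≤ t.card • K := sum_le_card_nsmul t _ K hS
    _ = t.card * K := nsmul_eq_mul _ _

end Probability

theorem margin_misclassification_bound_general {Ω : Type*} [MeasureSpace Ω] (μ : Measure Ω)
    [IsProbabilityMeasure μ] (d C : ℕ) (B γ : ℝ) (hγ : 0 < γ)
    (z : EuclideanSpace ℝ (Fin d)) (ztil : Ω → EuclideanSpace ℝ (Fin d))
    (hz : MemLp ztil 2 μ)
    (w : Fin C → EuclideanSpace ℝ (Fin d)) (hw : ∀ c, ‖w c‖ ≤ B)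
    (y : Fin C) (hmargin : ∀ c, c ≠ y → ⟪w y, z⟫ ≥ ⟪w c, z⟫ + γ) :
    (μ {ω | ∃ c, c ≠ y ∧ ⟪w y, ztil ω⟫ ≤ ⟪w c, ztil ω⟫}).toReal ≤
      4 * (C - 1) * B ^ 2 / γ ^ 2 * ∫ ω, ‖ztil ω - z‖ ^ 2 ∂μ := by
  have hint : Integrable (fun ω => ‖ztil ω - z‖ ^ 2) μ :=
    (hz.sub (memLp_const z)).integrable_norm_pow two_ne_zero
  have hclass : ∀ c ∈ univ.erase y, μ.real {ω | ⟪w y, ztil ω⟫ ≤ ⟪w c, ztil ω⟫} ≤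
      (∫ ω, 4 * B ^ 2 * ‖ztil ω - z‖ ^ 2 ∂μ) / γ ^ 2 := fun c hc =>
    measureReal_le_integral_div_of_forall_le (.of_forall fun ω => by positivity)
      (hint.const_mul _) (by positivity) fun ω hω =>
        sq_le_four_mul_sq_mul_norm_sub_sq_of_margin hγ.le (hw y) (hw c)
          (hmargin c (ne_of_mem_erase hc)) hω
  have hevent : {ω | ∃ c, c ≠ y ∧ ⟪w y, ztil ω⟫ ≤ ⟪w c, ztil ω⟫} =
      ⋃ c ∈ univ.erase y, {ω | ⟪w y, ztil ω⟫ ≤ ⟪w c, ztil ω⟫} := by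
    ext ω; simp
  have hcard : ((univ.erase y).card : ℝ) = C - 1 := by
    rw [card_erase_of_mem (mem_univ y), card_univ, Fintype.card_fin, Nat.cast_pred y.pos]
  rw [← measureReal_def, hevent]
  calc _ ≤ _ := measureReal_biUnion_le_card_mul _ _ hclass
    _ = _ := by rw [hcard, integral_const_mul]; ring

theorem margin_misclassification_bound {Ω : Type*} [MeasureSpace Ω] (μ : Measure Ω)
    [IsProbabilityMeasure μ] (d C : ℕ) (B γ : ℝ) (hB : 0 < B) (hγ : 0 < γ)
    (z : EuclideanSpace ℝ (Fin d)) (ztil : Ω → EuclideanSpace ℝ (Fin d))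
    (hz : MemLp ztil 2 μ)
    (w : Fin C → EuclideanSpace ℝ (Fin d)) (hw : ∀ c, ‖w c‖ ≤ B)
    (y : Fin C) (hmargin : ∀ c, c ≠ y → ⟪w y, z⟫ ≥ ⟪w c, z⟫ + γ) :
    (μ {ω | ∃ c, c ≠ y ∧ ⟪w y, ztil ω⟫ ≤ ⟪w c, ztil ω⟫}).toReal ≤
      4 * (C - 1) * B ^ 2 / γ ^ 2 * ∫ ω, ‖ztil ω - z‖ ^ 2 ∂μ :=
  margin_misclassification_bound_general μ d C B γ hγ z ztil hz w hw y hmargin
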